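/- arXiv:1610.02655 — 4 statements merged into one kernel-verified Lean document; each statement's English description precedes it below -/
import Mathlib

section
/- Let S = K[x_1,...,x_n] be the standard graded polynomial ring over a field K, let c ∈ ℤ, and let i ≥ 0 and 0 ≤ j ≤ n+i-1. Then the higher iterated Hilbert coefficient e^i_j(S(-c)) equals the generalized binomial coefficient C(c, j). In particular, e^i_j(S(-c)) = 0 if and only if 0 ≤ c < j. -/
/-!
With `m = n + i - 1`, upper negation and the Chu–Vandermonde identity expand `C(x - c + m, m)`
in the basis `C(x + m - j, m - j)`, `0 ≤ j ≤ m`, with coefficients `(-1)^j C(c, j)`. These basis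
functions are linearly independent on `ℤ`: at `x = t - 1 - m` the ones with `j < t` vanish and
the one with `j = t` equals `±1`, so a downward induction on `t` recovers every coefficient. Finally, for an integer `c < 0`,
`C(c, j) = ±C(j - c - 1, j)` is never zero, while for `c ≥ 0` it vanishes exactly when `c < j`.
-/

open Finset

namespace Ring

variable {R : Type*} [CommRing R] [BinomialRing R]

theorem choose_eq_neg_one_pow_mul_choose (u : R) (k : ℕ) :
    choose u k = (-1) ^ k * choose (k - 1 - u) k := by
  have h := choose_neg (-u) k
  rw [neg_neg, Units.smul_def, Int.coe_negOnePow_natCast, zsmul_eq_mul] at h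
  rw [h, show -u + k - 1 = (k : R) - 1 - u by ring, Int.cast_pow, Int.cast_neg, Int.cast_one]

theorem choose_neg_one (k : ℕ) : choose (-1 : R) k = (-1) ^ k := by
  rw [choose_neg, add_sub_cancel_left, choose_natCast, Nat.choose_self, Units.smul_def,
    Int.coe_negOnePow_natCast]
  simp

theorem choose_sub_add_eq_sum (c r : R) (m : ℕ) :
    choose (r - c + m) m =
      ∑ j ∈ range (m + 1), (-1) ^ j * choose c j * choose (r + m - j) (m - j) := by
  have hflip (j : ℕ) (hj : j ≤ m) :
      choose (r + m - j) (m - j) = (-1) ^ (m - j) * choose (-r - 1) (m - j) := by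
    rw [choose_eq_neg_one_pow_mul_choose, Nat.cast_sub hj]
    ring_nf
  rw [choose_eq_neg_one_pow_mul_choose, show (m : R) - 1 - (r - c + m) = c + (-r - 1) by ring,
    add_choose_eq m (Commute.all _ _), Nat.sum_antidiagonal_eq_sum_range_succ_mk, mul_sum]
  refine sum_congr rfl fun j hj => ?_
  rw [hflip j (Nat.lt_succ_iff.mp (mem_range.mp hj)),
    ← pow_mul_pow_sub (-1 : R) (Nat.lt_succ_iff.mp (mem_range.mp hj))]
  ring

theorem sum_mul_choose_eq_mul_neg_one_pow {m t : ℕ} (ht : t ≤ m) {d : ℕ → R}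
    (hd : ∀ j, t < j → j ≤ m → d j = 0) :
    ∑ j ∈ range (m + 1), d j * choose (((t - 1 - m : ℤ) : R) + m - j) (m - j) =
      d t * (-1) ^ (m - t) := by
  rw [sum_eq_single_of_mem t (mem_range.mpr (Nat.lt_succ_of_le ht))]
  · rw [show ((t - 1 - m : ℤ) : R) + m - t = -1 by push_cast; ring, choose_neg_one]
  intro j hj hjt
  rcases lt_or_gt_of_ne hjt with hjt | hjt
  · rw [show ((t - 1 - m : ℤ) : R) + m - j = ((t - 1 - j : ℕ) : R) by
      push_cast [Nat.cast_sub (Nat.le_sub_one_of_lt hjt), Nat.cast_sub (Nat.one_le_of_lt hjt)]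
      ring, choose_natCast, Nat.choose_eq_zero_of_lt (by omega), Nat.cast_zero, mul_zero]
  · rw [hd j hjt (Nat.lt_succ_iff.mp (mem_range.mp hj)), zero_mul]

theorem eq_zero_of_forall_sum_mul_choose_eq_zero {m : ℕ} {d : ℕ → R}
    (h : ∀ x : ℤ, ∑ j ∈ range (m + 1), d j * choose ((x : R) + m - j) (m - j) = 0) :
    ∀ j ≤ m, d j = 0 := by
  intro j
  induction j using Nat.strong_decreasing_induction with
  | base => exact ⟨m, fun j hj hjm => absurd hjm (not_le.mpr hj)⟩
  | step t ih =>
    intro ht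
    have h_eval := h (t - 1 - m)
    rw [sum_mul_choose_eq_mul_neg_one_pow ht ih] at h_eval
    exact mul_neg_one_pow_eq_zero_iff.mp h_eval

theorem choose_int_eq_zero_iff (c : ℤ) (j : ℕ) : choose c j = 0 ↔ 0 ≤ c ∧ c < j := by
  cases c with
  | ofNat a =>
    rw [Int.ofNat_eq_natCast, choose_natCast, Nat.cast_eq_zero, Nat.choose_eq_zero_iff]
    omega
  | negSucc a =>
    rw [Int.negSucc_eq, choose_neg, show (a : ℤ) + 1 + j - 1 = (a + j : ℕ) by push_cast; ring,
      choose_natCast, smul_eq_zero_iff_eq, Nat.cast_eq_zero]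
    simp only [(Nat.choose_pos (Nat.le_add_left j a)).ne', false_iff]
    omega

theorem choose_intCast_eq_zero_iff [CharZero R] (c : ℤ) (j : ℕ) :
    choose (c : R) j = 0 ↔ 0 ≤ c ∧ c < j := by
  have h := map_choose (Int.castRingHom R) c j
  rw [eq_intCast, eq_intCast] at h
  rw [← h, Int.cast_eq_zero, choose_int_eq_zero_iff]

end Ring

theorem higher_hilbert_coefficients_of_shifted_free_module_general
    (n : ℕ) (c : ℤ) (i : ℕ) (e : ℕ → ℚ)
    (he : ∀ x : ℤ,
      Ring.choose ((x : ℚ) - (c : ℚ) + (n : ℚ) + (i : ℚ) - 1) (n + i - 1) =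
        ∑ j ∈ range (n + i), (-1 : ℚ) ^ j * e j *
          Ring.choose ((x : ℚ) + (n : ℚ) + (i : ℚ) - (j : ℚ) - 1) (n + i - j - 1)) :
    ∀ j : ℕ, j ≤ n + i - 1 →
      e j = Ring.choose (c : ℚ) j ∧ (e j = 0 ↔ 0 ≤ c ∧ c < j) := by
  -- for `n + i = 0` the hypothesis `he` reads `1 = 0`
  obtain ⟨m, hm⟩ : ∃ m, n + i = m + 1 :=
    Nat.exists_eq_add_one.mpr <| Nat.pos_of_ne_zero fun h => by simpa [h] using he 0
  have hmQ : (n : ℚ) + i = m + 1 := by exact_mod_cast hm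
  have hexp (x : ℤ) : ∑ j ∈ range (m + 1), (-1) ^ j * e j * Ring.choose ((x : ℚ) + m - j) (m - j) =
      Ring.choose ((x : ℚ) - c + m) m := by
    have h := he x
    rw [show (x : ℚ) - c + n + i - 1 = x - c + m by linear_combination hmQ,
      show n + i - 1 = m by omega, hm] at h
    rw [h]
    refine sum_congr rfl fun j _ => ?_
    rw [show (x : ℚ) + n + i - j - 1 = x + m - j by linear_combination hmQ,
      Nat.sub_right_comm, Nat.add_sub_cancel]
  intro j hj
  have hej : e j = Ring.choose (c : ℚ) j := by
    refine sub_eq_zero.mp (neg_one_pow_mul_eq_zero_iff.mp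
      (Ring.eq_zero_of_forall_sum_mul_choose_eq_zero (m := m)
        (d := fun j => (-1) ^ j * (e j - Ring.choose (c : ℚ) j)) (fun x => ?_) j (by omega)))
    simp only [mul_sub, sub_mul, sum_sub_distrib, hexp, ← Ring.choose_sub_add_eq_sum, sub_self]
  exact ⟨hej, hej ▸ Ring.choose_intCast_eq_zero_iff c j⟩

/-- For `S = K[x_1,…,x_n]`, `c ∈ ℤ`, `i ≥ 0`: if the `i`-th iterated Hilbert
polynomial `P^i_{S(-c)}(x) = C(x - c + n + i - 1, n + i - 1)` of `S(-c)` is expanded in the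
binomial basis as `Σ_{j=0}^{n+i-1} (-1)^j e_j C(x + n + i - j - 1, n + i - j - 1)`, then for
`0 ≤ j ≤ n + i - 1` the higher iterated Hilbert coefficient satisfies `e_j = C(c, j)`;
in particular `e_j = 0` if and only if `0 ≤ c < j`. -/
theorem higher_hilbert_coefficients_of_shifted_free_module
    (n : ℕ) (hn : 1 ≤ n) (c : ℤ) (i : ℕ) (e : ℕ → ℚ)
    (he : ∀ x : ℤ,
      Ring.choose ((x : ℚ) - (c : ℚ) + (n : ℚ) + (i : ℚ) - 1) (n + i - 1) =
        ∑ j ∈ range (n + i), (-1 : ℚ) ^ j * e j *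
          Ring.choose ((x : ℚ) + (n : ℚ) + (i : ℚ) - (j : ℚ) - 1) (n + i - j - 1)) :
    ∀ j : ℕ, j ≤ n + i - 1 →
      e j = Ring.choose (c : ℚ) j ∧ (e j = 0 ↔ 0 ≤ c ∧ c < j) :=
  higher_hilbert_coefficients_of_shifted_free_module_general n c i e he
end

section
/- With notation as above (p_1 ≤ ... ≤ p_m nonnegative integers, a, b integers, j ≥ 0), the sum F(k) = Σ_{|β| = k-b} C(pβ + a, j) satisfies C(k-b+m-1, m-1) * C(p_1(k-b)+a, j) ≤ F(k) ≤ C(k-b+m-1, m-1) * C(p_m(k-b)+a, j) for k ≫ 0, and equality F(k) = C(k-b+m-1, m-1) * C(p_m(k-b)+a, j) holds for all k ≫ 0 and all j if and only if p_1 = p_2 = ... = p_m. -/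
/-!
Write `n = k - b`. For `|β| = n` the weight `p·β` lies between `p_1 n` and `p_m n`. On the
integers `y ↦ C(y, j)` is nondecreasing on `y ≥ 0`, and `|C(y, j)| = C(j - 1 - y, j)` for `y < 0`,
so for large `n` the upper bound, and the lower bound when `p_1 > 0`, hold term by term.

When `p_1 = 0` the lower bound asks for `C(a, j)` per term on average. Term by term this fails
only if `C(a, j) > 0` with `a < 0` (the terms with `0 ≤ p·β + a < j` vanish); but then every
term is nonnegative, and for a fixed large `h` the terms with `β_m ≥ h` exceed
`2^(m-1) C(a, j)`. Since `C(2q + r, r) ≤ 2^r C(q + r, r)`, these `β` make up at least a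
`2^(1-m)` fraction of all of them once `n ≥ 2h`.

For the equality case take `j = 1`: the sum of the `p·β ≤ p_m n` reaches `#β · p_m n` only if
`p·β = p_m n` for every `β`, in particular for `β = n e_t`, which gives `p_t = p_m`.
-/

open Finset

/-- `F j k = Σ_{β ∈ ℕ^m, |β| = k-b} C(p·β + a, j)`, the `j`-th higher iterated Hilbert
coefficient of `A(-a,-b)_k`. -/
noncomputable def coeffSum (m : ℕ) (p : Fin m → ℕ) (a b : ℤ) (j : ℕ) (k : ℤ) : ℚ :=
  ∑ β ∈ Finset.Nat.antidiagonalTuple m (k - b).toNat,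
    Ring.choose (((∑ t, p t * β t : ℕ) : ℚ) + (a : ℚ)) j

theorem Nat.add_one_le_choose_add (x : ℕ) {j : ℕ} (hj : j ≠ 0) : x + 1 ≤ (x + j).choose j := by
  rw [← Nat.choose_symm_add, ← Nat.choose_succ_self_right]
  exact Nat.choose_le_choose x (by omega)

theorem Nat.choose_two_mul_add_le (q r : ℕ) : (2 * q + r).choose r ≤ 2 ^ r * (q + r).choose r := by
  induction r with
  | zero => simp
  | succ r ih =>
    have hl := Nat.add_one_mul_choose_eq (2 * q + r) r
    have hr := Nat.add_one_mul_choose_eq (q + r) r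
    refine Nat.le_of_mul_le_mul_right (c := r + 1) ?_ r.succ_pos
    calc (2 * q + (r + 1)).choose (r + 1) * (r + 1) = (2 * q + r + 1) * (2 * q + r).choose r := by
          rw [hl]; rfl
      _ ≤ 2 * (q + r + 1) * (2 ^ r * (q + r).choose r) := Nat.mul_le_mul (by omega) ih
      _ = 2 ^ (r + 1) * (q + (r + 1)).choose (r + 1) * (r + 1) := by
          rw [pow_succ, mul_assoc (2 ^ r * 2), ← add_assoc q r 1, ← hr]; ring

theorem Int.cast_ringChoose {R : Type*} [Ring R] [BinomialRing R] (y : ℤ) (j : ℕ) :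
    ((Ring.choose y j : ℤ) : R) = Ring.choose (y : R) j :=
  Ring.map_choose (Int.castRingHom R) y j

namespace Ring

variable {j : ℕ}

theorem choose_int_of_nonneg {y : ℤ} (hy : 0 ≤ y) (j : ℕ) :
    choose y j = (y.toNat.choose j : ℤ) := by
  lift y to ℕ using hy
  simpa using choose_natCast y j

theorem choose_int_of_neg {y : ℤ} (hy : y < 0) (j : ℕ) :
    choose y j = (-1) ^ j * (((j : ℤ) - 1 - y).toNat.choose j : ℤ) := by
  have h := choose_neg (-y) j
  rw [neg_neg, choose_int_of_nonneg (y := -y + j - 1) (by omega), Units.smul_def,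
    Int.coe_negOnePow_natCast, smul_eq_mul] at h
  rw [h, show -y + j - 1 = j - 1 - y by ring]

theorem choose_int_le_choose_int_of_nonneg {y x : ℤ} (hy : 0 ≤ y) (hyx : y ≤ x) :
    choose y j ≤ choose x j := by
  rw [choose_int_of_nonneg hy, choose_int_of_nonneg (hy.trans hyx)]
  exact_mod_cast Nat.choose_le_choose j (by omega)

theorem choose_int_nonneg {y : ℤ} (hy : 0 ≤ y) : 0 ≤ choose y j := by
  rw [choose_int_of_nonneg hy]; positivity

theorem choose_int_le_choose_int_of_le_of_sub_le {a y x : ℤ} (hay : a ≤ y) (hyx : y ≤ x)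
    (hx : (j : ℤ) - 1 - a ≤ x) : choose y j ≤ choose x j := by
  rcases le_or_gt 0 y with hy | hy
  · exact choose_int_le_choose_int_of_nonneg hy hyx
  rw [choose_int_of_neg hy, choose_int_of_nonneg (by omega)]
  calc (-1) ^ j * (((j : ℤ) - 1 - y).toNat.choose j : ℤ) ≤ ((j : ℤ) - 1 - y).toNat.choose j := by
        rcases neg_one_pow_eq_or ℤ j with h | h <;> rw [h] <;> simp
    _ ≤ x.toNat.choose j := by
        exact_mod_cast Nat.choose_le_choose j (show ((j : ℤ) - 1 - y).toNat ≤ x.toNat by omega)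

theorem choose_int_le_choose_int_of_nonpos {a y : ℤ} (hay : a ≤ y) (ha : choose a j ≤ 0) :
    choose a j ≤ choose y j := by
  rcases le_or_gt 0 y with hy | hy
  · exact ha.trans (choose_int_nonneg hy)
  rw [choose_int_of_neg hy]
  rw [choose_int_of_neg (hay.trans_lt hy)] at ha ⊢
  have hpos : 0 < ((j : ℤ) - 1 - a).toNat.choose j := Nat.choose_pos (by omega)
  rcases neg_one_pow_eq_or ℤ j with h | h <;> simp only [h] at ha ⊢
  · omega
  · have := Nat.choose_le_choose j (show ((j : ℤ) - 1 - y).toNat ≤ ((j : ℤ) - 1 - a).toNat by omega)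
    omega

theorem choose_int_nonneg_of_pos {a y : ℤ} (hay : a ≤ y) (ha : 0 < choose a j) :
    0 ≤ choose y j := by
  rcases le_or_gt 0 y with hy | hy
  · exact choose_int_nonneg hy
  rw [choose_int_of_neg hy]
  rw [choose_int_of_neg (hay.trans_lt hy)] at ha
  rcases neg_one_pow_eq_or ℤ j with h | h <;> simp only [h] at ha ⊢ <;> omega

theorem exists_forall_le_choose_int (hj : j ≠ 0) (M : ℤ) :
    ∃ c : ℤ, ∀ y ≥ c, M ≤ choose y j := by
  refine ⟨M.toNat + j, fun y hy => ?_⟩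
  rw [choose_int_of_nonneg (by omega)]
  have := (Nat.add_one_le_choose_add M.toNat hj).trans (Nat.choose_le_choose j
    (show M.toNat + j ≤ y.toNat by omega))
  omega

end Ring

namespace Finset.Nat

theorem card_antidiagonalTuple (m n : ℕ) : #(antidiagonalTuple m n) = m.multichoose n := by
  rw [← piAntidiag_univ_fin_eq_antidiagonalTuple]
  simpa [finsuppAntidiag] using
    card_finsuppAntidiag_nat_eq_multichoose (s := (univ : Finset (Fin m))) n

theorem card_filter_le_apply_antidiagonalTuple {m n h : ℕ} (i : Fin m) (hn : h ≤ n) :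
    #{β ∈ antidiagonalTuple m n | h ≤ β i} = #(antidiagonalTuple m (n - h)) := by
  have hsum (γ : Fin m → ℕ) : ∑ t, (γ + Pi.single i h : Fin m → ℕ) t = ∑ t, γ t + h := by
    simp [sum_add_distrib]
  refine card_nbij' (· - Pi.single i h) (· + Pi.single i h) ?_ ?_ ?_ ?_
  · intro β hβ
    simp only [coe_filter, Set.mem_ofPred_eq, mem_antidiagonalTuple] at hβ
    have hle : Pi.single i h ≤ β := by
      intro t; rcases eq_or_ne t i with rfl | ht <;> simp_all
    have := hsum (β - Pi.single i h)
    rw [tsub_add_cancel_of_le hle] at this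
    simp only [mem_coe, mem_antidiagonalTuple]; omega
  · intro γ hγ
    simp only [mem_coe, mem_antidiagonalTuple] at hγ
    simp only [coe_filter, Set.mem_ofPred_eq, mem_antidiagonalTuple, hsum, hγ]
    simp [Nat.sub_add_cancel hn]
  · intro β hβ
    simp only [coe_filter, Set.mem_ofPred_eq] at hβ
    refine tsub_add_cancel_of_le fun t => ?_
    rcases eq_or_ne t i with rfl | ht <;> simp_all
  · intro γ _
    exact add_tsub_cancel_right γ _

theorem card_antidiagonalTuple_eq_choose {m : ℕ} (hm : m ≠ 0) (n : ℕ) :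
    #(antidiagonalTuple m n) = (n + m - 1).choose (m - 1) := by
  rw [card_antidiagonalTuple, Nat.multichoose_eq, show m + n - 1 = n + (m - 1) by omega,
    Nat.choose_symm_add, show n + (m - 1) = n + m - 1 by omega]

end Finset.Nat

theorem Finset.card_mul_le_sum_of_subset {ι : Type*} {s t : Finset ι} {f : ι → ℤ} {B : ℤ} {K : ℕ}
    (hst : s ⊆ t) (hf : ∀ i ∈ t, 0 ≤ f i) (hs : ∀ i ∈ s, K * B ≤ f i) (hcard : #t ≤ K * #s)
    (hB : 0 ≤ B) : #t * B ≤ ∑ i ∈ t, f i :=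
  calc (#t : ℤ) * B ≤ (K * #s : ℕ) * B := by gcongr
    _ = #s • (K * B) := by push_cast; ring
    _ ≤ ∑ i ∈ s, f i := card_nsmul_le_sum s f _ hs
    _ ≤ ∑ i ∈ t, f i := sum_le_sum_of_subset_of_nonneg hst fun i hi _ => hf i hi

open Matrix Finset.Nat

section DotProduct

variable {m n : ℕ} {p β : Fin m → ℕ} {c : ℕ}

theorem mul_le_dotProduct_of_mem_antidiagonalTuple (hp : ∀ t, c ≤ p t)
    (hβ : β ∈ antidiagonalTuple m n) : c * n ≤ p ⬝ᵥ β := by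
  rw [mem_antidiagonalTuple] at hβ
  rw [← hβ, mul_sum]
  exact sum_le_sum fun t _ => Nat.mul_le_mul_right _ (hp t)

theorem dotProduct_le_mul_of_mem_antidiagonalTuple (hp : ∀ t, p t ≤ c)
    (hβ : β ∈ antidiagonalTuple m n) : p ⬝ᵥ β ≤ c * n := by
  rw [mem_antidiagonalTuple] at hβ
  rw [← hβ, mul_sum]
  exact sum_le_sum fun t _ => Nat.mul_le_mul_right _ (hp t)

theorem apply_mul_apply_le_dotProduct (p β : Fin m → ℕ) (t : Fin m) : p t * β t ≤ p ⬝ᵥ β :=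
  single_le_sum (f := fun t => p t * β t) (fun _ _ => Nat.zero_le _) (mem_univ t)

theorem forall_eq_of_sum_dotProduct_eq (hp : ∀ t, p t ≤ c) (hn : n ≠ 0)
    (h : ∑ β ∈ antidiagonalTuple m n, p ⬝ᵥ β = #(antidiagonalTuple m n) * (c * n)) (t : Fin m) :
    p t = c := by
  have hsingle : Pi.single t n ∈ antidiagonalTuple m n := by
    simp [mem_antidiagonalTuple]
  have heq := (sum_eq_sum_iff_of_le fun β hβ => dotProduct_le_mul_of_mem_antidiagonalTuple hp hβ).1
    (by rw [h, sum_const, smul_eq_mul]) _ hsingle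
  rw [dotProduct_single] at heq
  exact Nat.eq_of_mul_eq_mul_right (Nat.pos_of_ne_zero hn) heq

end DotProduct

section SumChoose

variable {m : ℕ} (p : Fin m → ℕ) (a : ℤ) (j : ℕ)

def sumChoose (n : ℕ) : ℤ :=
  ∑ β ∈ antidiagonalTuple m n, Ring.choose (((p ⬝ᵥ β : ℕ) : ℤ) + a) j

theorem sumChoose_eq_of_forall_eq {c : ℕ} (hp : ∀ t, p t = c) (n : ℕ) :
    sumChoose p a j n = #(antidiagonalTuple m n) * Ring.choose (((c * n : ℕ) : ℤ) + a) j := by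
  rw [sumChoose, ← nsmul_eq_mul, ← sum_const]
  refine sum_congr rfl fun β hβ => ?_
  rw [le_antisymm (dotProduct_le_mul_of_mem_antidiagonalTuple (fun t => (hp t).le) hβ)
    (mul_le_dotProduct_of_mem_antidiagonalTuple (fun t => (hp t).ge) hβ)]

theorem exists_sumChoose_le {c : ℕ} (hc : c ≠ 0) (hp : ∀ t, p t ≤ c) : ∃ n₀, ∀ n ≥ n₀,
    sumChoose p a j n ≤ #(antidiagonalTuple m n) * Ring.choose (((c * n : ℕ) : ℤ) + a) j := by
  refine ⟨j + 2 * a.natAbs, fun n hn => ?_⟩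
  rw [sumChoose, ← nsmul_eq_mul]
  refine sum_le_card_nsmul _ _ _ fun β hβ => ?_
  have hdot : ((p ⬝ᵥ β : ℕ) : ℤ) ≤ ((c * n : ℕ) : ℤ) := by
    exact_mod_cast dotProduct_le_mul_of_mem_antidiagonalTuple hp hβ
  have hcn : (n : ℤ) ≤ ((c * n : ℕ) : ℤ) := by
    exact_mod_cast Nat.le_mul_of_pos_left n (Nat.pos_of_ne_zero hc)
  exact Ring.choose_int_le_choose_int_of_le_of_sub_le (a := a) (by omega) (by omega) (by omega)

theorem exists_le_sumChoose_zero {L : Fin m} (hL : p L ≠ 0) : ∃ n₀, ∀ n ≥ n₀,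
    #(antidiagonalTuple m n) * Ring.choose a j ≤ sumChoose p a j n := by
  by_cases hB : Ring.choose a j ≤ 0
  · refine ⟨0, fun n _ => ?_⟩
    rw [sumChoose, ← nsmul_eq_mul]
    exact card_nsmul_le_sum _ _ _ fun β _ => Ring.choose_int_le_choose_int_of_nonpos (by omega) hB
  push Not at hB
  rcases eq_or_ne j 0 with rfl | hj
  · exact ⟨0, fun n _ => by simp [sumChoose]⟩
  obtain ⟨y₀, hy₀⟩ := Ring.exists_forall_le_choose_int hj (2 ^ (m - 1) * Ring.choose a j)
  set h := (y₀ - a).toNat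
  refine ⟨2 * h, fun n hn => ?_⟩
  refine card_mul_le_sum_of_subset (K := 2 ^ (m - 1)) (filter_subset (fun β => h ≤ β L) _)
    (fun β _ => Ring.choose_int_nonneg_of_pos (by omega) hB) (fun β hβ => ?_) ?_ hB.le
  · have hβL := (mem_filter.1 hβ).2
    have := apply_mul_apply_le_dotProduct p β L
    have : β L ≤ p L * β L := Nat.le_mul_of_pos_left _ (Nat.pos_of_ne_zero hL)
    exact_mod_cast hy₀ _ (by omega)
  · have hm : m ≠ 0 := L.pos.ne'
    rw [card_filter_le_apply_antidiagonalTuple L (by omega), card_antidiagonalTuple_eq_choose hm,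
      card_antidiagonalTuple_eq_choose hm]
    calc (n + m - 1).choose (m - 1) ≤ (2 * (n - h) + (m - 1)).choose (m - 1) :=
          Nat.choose_le_choose _ (by omega)
      _ ≤ 2 ^ (m - 1) * ((n - h) + (m - 1)).choose (m - 1) := Nat.choose_two_mul_add_le _ _
      _ = 2 ^ (m - 1) * (n - h + m - 1).choose (m - 1) := by congr 3; omega

theorem exists_le_sumChoose {c : ℕ} (hc : ∀ t, c ≤ p t) {L : Fin m} (hL : p L ≠ 0) :
    ∃ n₀, ∀ n ≥ n₀,
      #(antidiagonalTuple m n) * Ring.choose (((c * n : ℕ) : ℤ) + a) j ≤ sumChoose p a j n := by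
  rcases eq_or_ne c 0 with rfl | hc0
  · simpa using exists_le_sumChoose_zero p a j hL
  refine ⟨a.natAbs, fun n hn => ?_⟩
  rw [sumChoose, ← nsmul_eq_mul]
  refine card_nsmul_le_sum _ _ _ fun β hβ => ?_
  have hdot : ((c * n : ℕ) : ℤ) ≤ ((p ⬝ᵥ β : ℕ) : ℤ) := by
    exact_mod_cast mul_le_dotProduct_of_mem_antidiagonalTuple hc hβ
  have hcn : (n : ℤ) ≤ ((c * n : ℕ) : ℤ) := by
    exact_mod_cast Nat.le_mul_of_pos_left n (Nat.pos_of_ne_zero hc0)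
  exact Ring.choose_int_le_choose_int_of_nonneg (by omega) (by omega)

theorem forall_eq_of_sumChoose_one_eq {c n : ℕ} (hp : ∀ t, p t ≤ c) (hn : n ≠ 0)
    (h : sumChoose p a 1 n = #(antidiagonalTuple m n) * Ring.choose (((c * n : ℕ) : ℤ) + a) 1)
    (t : Fin m) : p t = c := by
  simp only [sumChoose, Ring.choose_one_right, sum_add_distrib, sum_const, nsmul_eq_mul, mul_add,
    add_left_inj] at h
  exact forall_eq_of_sum_dotProduct_eq hp hn (by exact_mod_cast h) t

end SumChoose

theorem coeffSum_eq_sumChoose (m : ℕ) (p : Fin m → ℕ) (a b : ℤ) (j : ℕ) (k : ℤ) :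
    coeffSum m p a b j k = sumChoose p a j (k - b).toNat := by
  rw [coeffSum, sumChoose, Int.cast_sum]
  refine sum_congr rfl fun β _ => ?_
  rw [Int.cast_ringChoose, Int.cast_add, Int.cast_natCast]
  rfl

theorem ringChoose_mul_ringChoose_eq {m : ℕ} (hm : m ≠ 0) {b k : ℤ} (hbk : b ≤ k) (c : ℕ)
    (a : ℤ) (j : ℕ) :
    Ring.choose ((k : ℚ) - b + m - 1) (m - 1) * Ring.choose ((c : ℚ) * ((k : ℚ) - b) + a) j =
      ((#(antidiagonalTuple m (k - b).toNat) *
        Ring.choose (((c * (k - b).toNat : ℕ) : ℤ) + a) j : ℤ) : ℚ) := by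
  obtain ⟨n, hn⟩ : ∃ n : ℕ, k - b = n := ⟨(k - b).toNat, by omega⟩
  have hnq : (k : ℚ) - b = n := by exact_mod_cast hn
  have hchoose : (n : ℚ) + m - 1 = ((n + m - 1 : ℕ) : ℚ) := by
    rw [Nat.cast_sub (by omega)]; push_cast; ring
  rw [hnq, hn, Int.toNat_natCast, card_antidiagonalTuple_eq_choose hm, hchoose,
    Ring.choose_natCast, Int.cast_mul, Int.cast_ringChoose]
  push_cast
  rfl

/-- With `p_1 ≤ … ≤ p_m` nonnegative integers, `a, b` integers and `j ≥ 0`, the sum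
`F(k) = Σ_{|β| = k-b} C(p·β + a, j)` satisfies, for `k ≫ 0`,
`C(k-b+m-1, m-1) C(p_1(k-b)+a, j) ≤ F(k) ≤ C(k-b+m-1, m-1) C(p_m(k-b)+a, j)`, and the upper
bound is attained for all `k ≫ 0` and all `j` if and only if `p_1 = p_2 = ⋯ = p_m`. -/
theorem coeffSum_bounds_and_equality_iff
    (m : ℕ) (hm : 1 ≤ m) (p : Fin m → ℕ) (hp : Monotone p) (a b : ℤ) :
    (∀ j : ℕ, ∃ N : ℤ, ∀ k ≥ N,
      Ring.choose ((k : ℚ) - (b : ℚ) + (m : ℚ) - 1) (m - 1) *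
          Ring.choose ((p ⟨0, hm⟩ : ℚ) * ((k : ℚ) - (b : ℚ)) + (a : ℚ)) j ≤
        coeffSum m p a b j k ∧
      coeffSum m p a b j k ≤
        Ring.choose ((k : ℚ) - (b : ℚ) + (m : ℚ) - 1) (m - 1) *
          Ring.choose ((p ⟨m - 1, by omega⟩ : ℚ) * ((k : ℚ) - (b : ℚ)) + (a : ℚ)) j) ∧
    ((∀ j : ℕ, ∃ N : ℤ, ∀ k ≥ N, coeffSum m p a b j k =
        Ring.choose ((k : ℚ) - (b : ℚ) + (m : ℚ) - 1) (m - 1) *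
          Ring.choose ((p ⟨m - 1, by omega⟩ : ℚ) * ((k : ℚ) - (b : ℚ)) + (a : ℚ)) j) ↔
      ∀ t t' : Fin m, p t = p t') := by
  have hm0 : m ≠ 0 := by omega
  set top : Fin m := ⟨m - 1, by omega⟩
  have hbot (t : Fin m) : p ⟨0, hm⟩ ≤ p t := hp (Fin.mk_le_mk.2 (Nat.zero_le _))
  have htop (t : Fin m) : p t ≤ p top := hp (Fin.mk_le_mk.2 (by omega))
  have hcast {k : ℤ} (hk : b ≤ k) := ringChoose_mul_ringChoose_eq hm0 hk
  have hconst (hpe : ∀ t t', p t = p t') (j : ℕ) {k : ℤ} (hk : b ≤ k) :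
      coeffSum m p a b j k = Ring.choose ((k : ℚ) - b + m - 1) (m - 1) *
        Ring.choose ((p top : ℚ) * ((k : ℚ) - b) + a) j := by
    rw [coeffSum_eq_sumChoose, hcast hk, sumChoose_eq_of_forall_eq p a j (fun t => hpe t top)]
  refine ⟨fun j => ?_, fun h => ?_, fun hpe j => ⟨b, fun k hk => hconst hpe j hk⟩⟩
  · by_cases hpe : ∀ t t', p t = p t'
    · refine ⟨b, fun k hk => ?_⟩
      rw [hconst hpe j hk, hpe ⟨0, hm⟩ top]
      exact ⟨le_rfl, le_rfl⟩
    have hpos : p top ≠ 0 := fun h0 => hpe fun t t' => by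
      have := htop t; have := htop t'; omega
    obtain ⟨n₀, hlow⟩ := exists_le_sumChoose p a j hbot hpos
    obtain ⟨n₁, hup⟩ := exists_sumChoose_le p a j hpos htop
    refine ⟨b + n₀ + n₁, fun k hk => ?_⟩
    rw [coeffSum_eq_sumChoose, hcast (by omega), hcast (by omega)]
    exact ⟨by exact_mod_cast hlow _ (by omega), by exact_mod_cast hup _ (by omega)⟩
  · obtain ⟨N, hN⟩ := h 1
    have hk := hN (max N (b + 1)) (le_max_left _ _)
    rw [coeffSum_eq_sumChoose, hcast (by omega)] at hk
    have heq := forall_eq_of_sumChoose_one_eq p a htop (by omega) (Int.cast_injective hk)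
    exact fun t t' => (heq t).trans (heq t').symm
end

section
/- Let A = K[x_1,...,x_n,y_1,...,y_m] be bigraded with deg x_i = (1,0), deg y_t = (p_t,1), and M a finitely generated bigraded A-module. Then the Krull dimension of the S-module M_k = ⊕_i M_{(i,k)} is constant for all k ≫ 0. -/
open MvPolynomial

/-- The `S = K[x_1,…,x_n]`-module structure on an `A = K[x_1,…,x_n,y_1,…,y_m]`-module, via the
inclusion `S → A`. -/
noncomputable def smodule (K : Type) [Field K] (n m : ℕ) (M : Type) [AddCommGroup M]
    [Module (MvPolynomial (Fin n ⊕ Fin m) K) M] : Module (MvPolynomial (Fin n) K) M :=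
  Module.compHom M ((rename (Sum.inl : Fin n → Fin n ⊕ Fin m)).toRingHom :
    MvPolynomial (Fin n) K →+* MvPolynomial (Fin n ⊕ Fin m) K)

/-- The Krull dimension of the `k`-th strand `M_k = ⊕_i M_{(i,k)}` of a bigraded module, as a
graded module over `S = K[x_1,…,x_n]`: the Krull dimension of `S` modulo the annihilator. -/
noncomputable def strandKrullDim (K : Type) [Field K] (n m : ℕ) (M : Type) [AddCommGroup M]
    [Module (MvPolynomial (Fin n ⊕ Fin m) K) M] [Module K M] (ℳ : ℤ × ℤ → Submodule K M)
    (k : ℤ) : WithBot (WithTop ℕ) :=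
  letI := smodule K n m M
  ringKrullDim (MvPolynomial (Fin n) K ⧸ Module.annihilator (MvPolynomial (Fin n) K)
    (Submodule.span (MvPolynomial (Fin n) K) (⋃ i : ℤ, (ℳ (i, k) : Set M))))

section Aux

variable {n m : ℕ} (p : Fin m → ℕ)

/-- Abbreviation for the bigrading weight. -/
abbrev bwgt (n : ℕ) (p : Fin m → ℕ) : Fin n ⊕ Fin m → ℤ × ℤ :=
  Sum.elim (fun _ : Fin n => ((1 : ℤ), (0 : ℤ))) (fun t : Fin m => ((p t : ℤ), (1 : ℤ)))

lemma bwgt_snd_eq_zero (α : (Fin n ⊕ Fin m) →₀ ℕ) (h : ∀ t, α (Sum.inr t) = 0) :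
    (Finsupp.weight (bwgt n p) α).2 = 0 := by
  classical
  rw [Finsupp.weight_apply, Finsupp.sum]
  rw [Prod.snd_sum]
  apply Finset.sum_eq_zero
  rintro (j | t) ha
  · simp [bwgt]
  · exact absurd (h t) (Finsupp.mem_support_iff.mp ha)

lemma bwgt_exists_inr (α : (Fin n ⊕ Fin m) →₀ ℕ)
    (h : (Finsupp.weight (bwgt n p) α).2 ≠ 0) : ∃ t, α (Sum.inr t) ≠ 0 := by
  by_contra hc
  push_neg at hc
  exact h (bwgt_snd_eq_zero p α hc)

lemma bwgt_factor {K : Type} [Field K] (α : (Fin n ⊕ Fin m) →₀ ℕ) {t : Fin m}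
    (ht : α (Sum.inr t) ≠ 0) (c : K) :
    (X (Sum.inr t) : MvPolynomial (Fin n ⊕ Fin m) K) *
        monomial (α - Finsupp.single (Sum.inr t) 1) c = monomial α c ∧
      (Finsupp.weight (bwgt n p) (α - Finsupp.single (Sum.inr t) 1)).2
        = (Finsupp.weight (bwgt n p) α).2 - 1 := by
  have hle : Finsupp.single (Sum.inr t : Fin n ⊕ Fin m) 1 ≤ α :=
    Finsupp.single_le_iff.mpr (Nat.one_le_iff_ne_zero.mpr ht)
  have hsum : Finsupp.single (Sum.inr t : Fin n ⊕ Fin m) 1 +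
      (α - Finsupp.single (Sum.inr t) 1) = α := add_tsub_cancel_of_le hle
  constructor
  · rw [X, monomial_mul, one_mul, hsum]
  · have := congrArg (fun β => (Finsupp.weight (bwgt n p) β).2) hsum
    simp only [map_add, Prod.snd_add] at this
    have hsingle : (Finsupp.weight (bwgt n p)
        (Finsupp.single (Sum.inr t : Fin n ⊕ Fin m) 1)).2 = 1 := by
      rw [Finsupp.weight_apply, Finsupp.sum_single_index (by simp)]
      simp [bwgt]
    omega

end Aux

/-- Let `A = K[x_1,…,x_n,y_1,…,y_m]` be bigraded with `deg x_i = (1,0)`,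
`deg y_t = (p_t,1)`, and `M` a finitely generated bigraded `A`-module. Then the Krull dimension
of the `S`-module `M_k = ⊕_i M_{(i,k)}` is constant for `k ≫ 0`. -/
theorem strand_dimension_eventually_constant (K : Type) [Field K] (n m : ℕ) (p : Fin m → ℕ)
    (M : Type) [AddCommGroup M]
    [Module (MvPolynomial (Fin n ⊕ Fin m) K) M] [Module K M]
    [IsScalarTower K (MvPolynomial (Fin n ⊕ Fin m) K) M]
    [Module.Finite (MvPolynomial (Fin n ⊕ Fin m) K) M]
    (ℳ : ℤ × ℤ → Submodule K M)
    [DirectSum.Decomposition ℳ]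
    [SetLike.GradedSMul
      (weightedHomogeneousSubmodule K
        (Sum.elim (fun _ : Fin n => ((1 : ℤ), (0 : ℤ)))
          (fun t : Fin m => ((p t : ℤ), (1 : ℤ)))))
      ℳ] :
    ∃ k0 : ℤ, ∀ k : ℤ, k ≥ k0 →
      strandKrullDim K n m M ℳ k = strandKrullDim K n m M ℳ k0 := by
  classical
  letI := smodule K n m M
  -- finitely many generators over A
  obtain ⟨G, hG⟩ : (⊤ : Submodule (MvPolynomial (Fin n ⊕ Fin m) K) M).FG := Module.Finite.fg_top
  -- bound on second coordinates of the components of the generators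
  set k1 : ℤ :=
    ((G.sup fun g => (DirectSum.decompose ℳ g).support.sup fun c => c.2.toNat : ℕ) : ℤ) with hk1
  have hbound : ∀ g ∈ G, ∀ c : ℤ × ℤ, (DirectSum.decompose ℳ g) c ≠ 0 → c.2 ≤ k1 := by
    intro g hg c hc
    have h1 : c ∈ (DirectSum.decompose ℳ g).support := DFinsupp.mem_support_iff.mpr hc
    have h2 : c.2.toNat ≤ (DirectSum.decompose ℳ g).support.sup (fun c => c.2.toNat) :=
      Finset.le_sup (f := fun c : ℤ × ℤ => c.2.toNat) h1
    have h3 : (DirectSum.decompose ℳ g).support.sup (fun c => c.2.toNat)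
        ≤ G.sup fun g => (DirectSum.decompose ℳ g).support.sup fun c => c.2.toNat :=
      Finset.le_sup (f := fun g => (DirectSum.decompose ℳ g).support.sup fun c => c.2.toNat) hg
    calc c.2 ≤ (c.2.toNat : ℤ) := Int.self_le_toNat _
      _ ≤ k1 := by rw [hk1]; exact_mod_cast le_trans h2 h3
  -- the strand submodules over S
  set N : ℤ → Submodule (MvPolynomial (Fin n) K) M := fun k =>
    Submodule.span (MvPolynomial (Fin n) K) (⋃ i : ℤ, (ℳ (i, k) : Set M)) with hN
  -- the submodule generated by y_t • (elements of the k-th strand)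
  set P : ℤ → Submodule (MvPolynomial (Fin n) K) M := fun k =>
    Submodule.span (MvPolynomial (Fin n) K)
      (⋃ t : Fin m, (fun x : M => (X (Sum.inr t) : MvPolynomial (Fin n ⊕ Fin m) K) • x) ''
        (⋃ i : ℤ, (ℳ (i, k) : Set M))) with hP
  -- key: components in degree (·, k+1) of any element lie in P k
  have main : ∀ (k : ℤ), k1 ≤ k → ∀ (d : ℤ × ℤ), d.2 = k + 1 → ∀ z : M,
      ∀ a : MvPolynomial (Fin n ⊕ Fin m) K,
        ((DirectSum.decompose ℳ (a • z)) d : M) ∈ P k := by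
    intro k hk d hd z
    have hz : z ∈ Submodule.span (MvPolynomial (Fin n ⊕ Fin m) K) (G : Set M) := by
      rw [hG]; trivial
    induction hz using Submodule.span_induction with
    | mem x hx =>
      intro a
      rw [MvPolynomial.as_sum a, Finset.sum_smul, DirectSum.decompose_sum,
        DFinsupp.finset_sum_apply, AddSubmonoidClass.coe_finset_sum]
      apply Submodule.sum_mem
      intro α hα
      have hx' : (monomial α (coeff α a)) • x
          = ∑ c ∈ (DirectSum.decompose ℳ x).support,
              (monomial α (coeff α a)) • ((DirectSum.decompose ℳ x) c : M) := by
        rw [← Finset.smul_sum, DirectSum.sum_support_decompose]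
      rw [hx', DirectSum.decompose_sum, DFinsupp.finset_sum_apply,
        AddSubmonoidClass.coe_finset_sum]
      apply Submodule.sum_mem
      intro c hc
      have hmem : (monomial α (coeff α a)) • ((DirectSum.decompose ℳ x) c : M)
          ∈ ℳ (Finsupp.weight (bwgt n p) α + c) := by
        have h1 : (monomial α (coeff α a) : MvPolynomial (Fin n ⊕ Fin m) K)
            ∈ weightedHomogeneousSubmodule K (bwgt n p) (Finsupp.weight (bwgt n p) α) :=
          (mem_weightedHomogeneousSubmodule _ _ _ _).mpr
            (isWeightedHomogeneous_monomial _ _ _ rfl)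
        have h2 := SetLike.GradedSMul.smul_mem h1 ((DirectSum.decompose ℳ x) c).2
        rwa [vadd_eq_add] at h2
      by_cases hde : Finsupp.weight (bwgt n p) α + c = d
      · rw [DirectSum.decompose_of_mem_same ℳ (hde ▸ hmem)]
        have hc2 : c.2 ≤ k1 := hbound x hx c (DFinsupp.mem_support_iff.mp hc)
        have hsnd : (Finsupp.weight (bwgt n p) α).2 + c.2 = k + 1 := by
          have h3 := congrArg Prod.snd hde
          simp only [Prod.snd_add] at h3
          omega
        have h1 : (Finsupp.weight (bwgt n p) α).2 ≠ 0 := by omega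
        obtain ⟨t, ht⟩ := bwgt_exists_inr p α h1
        obtain ⟨hfac, hsnd'⟩ := bwgt_factor (K := K) p α ht (coeff α a)
        rw [← hfac, mul_smul]
        apply Submodule.subset_span
        refine Set.mem_iUnion.mpr ⟨t, ?_⟩
        refine ⟨(monomial (α - Finsupp.single (Sum.inr t) 1) (coeff α a)) •
            ((DirectSum.decompose ℳ x) c : M), ?_, rfl⟩
        have hmem' : (monomial (α - Finsupp.single (Sum.inr t) 1) (coeff α a)) •
            ((DirectSum.decompose ℳ x) c : M)
            ∈ ℳ (Finsupp.weight (bwgt n p) (α - Finsupp.single (Sum.inr t) 1) + c) := by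
          have h1' : (monomial (α - Finsupp.single (Sum.inr t) 1) (coeff α a) :
              MvPolynomial (Fin n ⊕ Fin m) K)
              ∈ weightedHomogeneousSubmodule K (bwgt n p)
                (Finsupp.weight (bwgt n p) (α - Finsupp.single (Sum.inr t) 1)) :=
            (mem_weightedHomogeneousSubmodule _ _ _ _).mpr
              (isWeightedHomogeneous_monomial _ _ _ rfl)
          have h2' := SetLike.GradedSMul.smul_mem h1' ((DirectSum.decompose ℳ x) c).2
          rwa [vadd_eq_add] at h2'
        have hidx : (Finsupp.weight (bwgt n p) (α - Finsupp.single (Sum.inr t) 1) + c)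
            = ((Finsupp.weight (bwgt n p) (α - Finsupp.single (Sum.inr t) 1) + c).1, k) := by
          refine Prod.ext rfl ?_
          simp only [Prod.snd_add, hsnd']
          omega
        exact Set.mem_iUnion.mpr
          ⟨(Finsupp.weight (bwgt n p) (α - Finsupp.single (Sum.inr t) 1) + c).1,
            hidx ▸ hmem'⟩
      · rw [DirectSum.decompose_of_mem_ne ℳ hmem hde]
        exact zero_mem _
    | zero =>
      intro a
      simp only [smul_zero, DirectSum.decompose_zero, DirectSum.zero_apply,
        ZeroMemClass.coe_zero]
      exact zero_mem _
    | add x y hx hy ihx ihy =>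
      intro a
      rw [smul_add, DirectSum.decompose_add, DirectSum.add_apply, Submodule.coe_add]
      exact add_mem (ihx a) (ihy a)
    | smul b x hx ih =>
      intro a
      rw [smul_smul]
      exact ih (a * b)
  -- every element of the (k+1)-st strand lies in P k
  have key : ∀ k : ℤ, k1 ≤ k → ∀ (i : ℤ) (v : M), v ∈ ℳ (i, k + 1) → v ∈ P k := by
    intro k hk i v hv
    have h1 : ((DirectSum.decompose ℳ ((1 : MvPolynomial (Fin n ⊕ Fin m) K) • v)) (i, k + 1) : M)
        ∈ P k := main k hk (i, k + 1) rfl v 1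
    rwa [one_smul, DirectSum.decompose_of_mem_same ℳ hv] at h1
  -- annihilators increase along the strands
  have ann_mono : ∀ k : ℤ, k1 ≤ k → (N k).annihilator ≤ (N (k + 1)).annihilator := by
    intro k hk s' hs'
    rw [Submodule.mem_annihilator] at hs' ⊢
    intro x hx
    have hPker : P k ≤ LinearMap.ker (LinearMap.lsmul (MvPolynomial (Fin n) K) M s') := by
      rw [hP]
      apply Submodule.span_le.mpr
      rintro y hy
      obtain ⟨t, hy⟩ := Set.mem_iUnion.mp hy
      obtain ⟨u, hu, rfl⟩ := hy
      obtain ⟨Si, hSi⟩ := Set.mem_iUnion.mp hu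
      simp only [LinearMap.mem_ker, LinearMap.lsmul_apply]
      have hu0 : s' • u = 0 :=
        hs' u (Submodule.subset_span (Set.mem_iUnion.mpr ⟨Si, hSi⟩))
      show (rename Sum.inl s' : MvPolynomial (Fin n ⊕ Fin m) K) •
        (X (Sum.inr t) : MvPolynomial (Fin n ⊕ Fin m) K) • u = 0
      rw [smul_smul, mul_comm, mul_smul,
        show (rename Sum.inl s' : MvPolynomial (Fin n ⊕ Fin m) K) • u = s' • u from rfl,
        hu0, smul_zero]
    have hker : N (k + 1) ≤ LinearMap.ker (LinearMap.lsmul (MvPolynomial (Fin n) K) M s') := by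
      rw [hN]
      apply Submodule.span_le.mpr
      intro v hv
      obtain ⟨Si, hSi⟩ := Set.mem_iUnion.mp hv
      exact hPker (key k hk Si v hSi)
    have := hker hx
    simpa only [LinearMap.mem_ker, LinearMap.lsmul_apply] using this
  -- stabilization of the chain of annihilators
  have hstep : ∀ j : ℕ, (N (k1 + j)).annihilator ≤ (N (k1 + (j + 1 : ℕ))).annihilator := by
    intro j
    have h1 := ann_mono (k1 + j) (le_add_of_nonneg_right (Int.natCast_nonneg j))
    have harg : k1 + (j : ℤ) + 1 = k1 + ((j : ℕ) + 1 : ℕ) := by push_cast; ring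
    rwa [harg] at h1
  obtain ⟨n0, hn0⟩ := monotone_stabilizes_iff_noetherian.mpr
    (inferInstance : IsNoetherian (MvPolynomial (Fin n) K) (MvPolynomial (Fin n) K))
    ⟨fun j => (N (k1 + j)).annihilator, monotone_nat_of_le_succ hstep⟩
  refine ⟨k1 + n0, ?_⟩
  intro k hk
  have hk1k : k1 ≤ k := by
    have : (0 : ℤ) ≤ (n0 : ℤ) := Int.natCast_nonneg n0
    omega
  have hann : (N k).annihilator = (N (k1 + n0)).annihilator := by
    have hj : k = k1 + ((k - k1).toNat : ℕ) := by
      rw [Int.toNat_of_nonneg (by omega)]; ring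
    have h2 : n0 ≤ (k - k1).toNat := by omega
    have h3 := hn0 _ h2
    rw [hj]
    exact h3.symm
  show ringKrullDim (MvPolynomial (Fin n) K ⧸ (N k).annihilator)
      = ringKrullDim (MvPolynomial (Fin n) K ⧸ (N (k1 + n0)).annihilator)
  rw [hann]
end

section
/- Let S = K[x_1,x_2], 𝔪 = (x_1,x_2). Then for all i ≥ 0, k ≥ 1, and 0 ≤ j, the higher iterated Hilbert coefficients of the powers of the maximal ideal satisfy e^i_j(𝔪^k) = (k+1)C(k,j) - kC(k+1,j); in particular e^i_j(𝔪^k) is a polynomial in k of degree j. -/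
open MvPolynomial Finset

/-- The iterated Hilbert functions: `H_0 = H` and `H_i(k) = Σ_{j ≤ k} H_{i-1}(j)`, where the
function `H` is supported on degrees `≥ i0`, so that the sum may be taken over `Icc i0 k`. -/
noncomputable def iterHilbert (H : ℤ → ℚ) (i0 : ℤ) : ℕ → ℤ → ℚ
  | 0 => H
  | (i + 1) => fun k => ∑ j ∈ Finset.Icc i0 k, iterHilbert H i0 i j

/-- The Hilbert function of `𝔪^k ⊆ S = K[x_1,x_2]`, `𝔪 = (x_1,x_2)`. -/
noncomputable def maxPowerHilbert (K : Type) [Field K] (k : ℕ) : ℤ → ℚ := fun x =>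
  if x < 0 then 0 else
    (Module.finrank K
      (↥(Submodule.restrictScalars K
          ((Ideal.span (Set.range (X : Fin 2 → MvPolynomial (Fin 2) K))) ^ k) ⊓
        homogeneousSubmodule (Fin 2) K x.toNat)) : ℚ)

/-!
The Hilbert function of `𝔪^k` is `x + 1` for `x ≥ k` and `0` below, so its Hilbert series is
`((k+1) z^k - k z^(k+1)) / (1 - z)^2`, and `e_j` are the Taylor coefficients at `z = 1` of the
numerator. Instead of manipulating series, note that both the iterated Hilbert functions and the
claimed polynomials `F_i` satisfy `F_(i+1)(x+1) = F_(i+1)(x) + F_i(x+1)` (for `F_i` this is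
Pascal's rule), agree for `i = 0` and `x ≥ k`, and vanish at `x = k - 1` for `i ≥ 1`. The vanishing
is Chu–Vandermonde with the negative binomial `C(k-1+n, n) = (-1)^n C(-k, n)`:
`Σ_j e_j C(-k, m-j) = (k+1) C(0, m) - k C(1, m) = 0` for `m ≥ 2`.
Polynomiality in `k` comes from `e_j = (1 - j) C(k+1, j)`.
-/

section IdealOfVars

variable {σ R : Type*} [CommSemiring R]

theorem MvPolynomial.IsHomogeneous.degree_eq_of_mem_support {p : MvPolynomial σ R} {n : ℕ}
    (hp : p.IsHomogeneous n) {d : σ →₀ ℕ} (hd : d ∈ p.support) : d.degree = n :=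
  not_not.mp fun h => mem_support_iff.mp hd (hp.coeff_eq_zero h)

theorem homogeneousSubmodule_le_pow_idealOfVars {k n : ℕ} (h : k ≤ n) :
    homogeneousSubmodule σ R n ≤ (idealOfVars σ R ^ k).restrictScalars R := fun p hp =>
  (mem_pow_idealOfVars_iff k p).mpr fun _ hd => (hp.degree_eq_of_mem_support hd).symm ▸ h

theorem pow_idealOfVars_inf_homogeneousSubmodule_of_lt {k n : ℕ} (h : n < k) :
    (idealOfVars σ R ^ k).restrictScalars R ⊓ homogeneousSubmodule σ R n = ⊥ := by
  refine eq_bot_iff.mpr fun p ⟨hpk, hpn⟩ => ?_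
  rw [Submodule.mem_bot, ← support_eq_empty]
  refine Finset.eq_empty_of_forall_notMem fun d hd => ?_
  have := (mem_pow_idealOfVars_iff k p).mp hpk d hd
  rw [hpn.degree_eq_of_mem_support hd] at this
  omega

end IdealOfVars

theorem finrank_homogeneousSubmodule_fin_two (K : Type*) [Field K] (n : ℕ) :
    Module.finrank K (homogeneousSubmodule (Fin 2) K n) = n + 1 := by
  let e : {d : Fin 2 →₀ ℕ | d.degree = n} ≃ antidiagonal n :=
    (Finsupp.equivFunOnFinite.trans (piFinTwoEquiv fun _ => ℕ)).subtypeEquiv fun d => by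
      simp [Finsupp.degree_eq_sum, Fin.sum_univ_two]
  rw [homogeneousSubmodule_eq_finsupp_supported,
    (AddMonoidAlgebra.supportedEquivFinsupp (R := K) _).finrank_eq, Module.finrank,
    rank_finsupp_self, Cardinal.toNat_lift, ← Nat.card, Nat.card_congr e, Nat.card_eq_fintype_card,
    Fintype.card_coe, Nat.card_antidiagonal]

theorem maxPowerHilbert_of_le (K : Type) [Field K] {k : ℕ} {x : ℤ} (h : (k : ℤ) ≤ x) :
    maxPowerHilbert K k x = x + 1 := by
  rw [maxPowerHilbert, if_neg (by omega),
    inf_eq_right.mpr (homogeneousSubmodule_le_pow_idealOfVars (by omega)),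
    finrank_homogeneousSubmodule_fin_two, Nat.cast_add_one, ← Int.cast_natCast,
    Int.toNat_of_nonneg (by omega)]

theorem maxPowerHilbert_of_lt (K : Type) [Field K] {k : ℕ} {x : ℤ} (h : x < k) :
    maxPowerHilbert K k x = 0 := by
  rw [maxPowerHilbert]
  split_ifs
  · rfl
  · rw [pow_idealOfVars_inf_homogeneousSubmodule_of_lt (by omega)]
    simp

section IterHilbert

variable {H : ℤ → ℚ} {i0 : ℤ}

theorem iterHilbert_succ_add_one (i : ℕ) {x : ℤ} (hx : i0 ≤ x + 1) :
    iterHilbert H i0 (i + 1) (x + 1) =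
      iterHilbert H i0 (i + 1) x + iterHilbert H i0 i (x + 1) := by
  simp only [iterHilbert]
  rw [← Order.succ_eq_add_one, ← insert_Icc_right_eq_Icc_succ hx, sum_insert (by simp), add_comm]

theorem iterHilbert_eq_zero_of_lt {a : ℤ} (hH : ∀ x < a, H x = 0) (i : ℕ) {x : ℤ} (hx : x < a) :
    iterHilbert H i0 i x = 0 := by
  induction i generalizing x with
  | zero => exact hH x hx
  | succ i ih => exact sum_eq_zero fun t ht => ih (by grind)

theorem iterHilbert_eq_of_recursion {a : ℤ} (ha : i0 ≤ a) {F : ℕ → ℤ → ℚ}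
    (hF : ∀ i x, F (i + 1) (x + 1) = F (i + 1) x + F i (x + 1))
    (hF_start : ∀ i, F (i + 1) (a - 1) = 0)
    (hH_lt : ∀ x < a, H x = 0) (hH_ge : ∀ x, a ≤ x → H x = F 0 x) :
    ∀ i x, a ≤ x → iterHilbert H i0 i x = F i x := by
  intro i
  induction i with
  | zero => exact hH_ge
  | succ i ih =>
    suffices ∀ x, a - 1 ≤ x → iterHilbert H i0 (i + 1) x = F (i + 1) x from
      fun x hx => this x (by omega)
    refine Int.leInduction ?_ fun x hx hx_eq => ?_
    · rw [iterHilbert_eq_zero_of_lt hH_lt _ (by omega), hF_start]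
    · rw [iterHilbert_succ_add_one i (by omega), hx_eq, ih (x + 1) (by omega), hF]

end IterHilbert

/-- The `i`-th iterated Hilbert polynomial of a module of dimension `2` with Hilbert
coefficients `e`. -/
noncomputable def iterHilbertPoly (e : ℕ → ℚ) (i : ℕ) (x : ℤ) : ℚ :=
  ∑ j ∈ range (i + 2),
    (-1 : ℚ) ^ j * e j * Ring.choose ((x : ℚ) + (i : ℚ) + 1 - (j : ℚ)) (i + 1 - j)

theorem iterHilbertPoly_succ_add_one (e : ℕ → ℚ) (i : ℕ) (x : ℤ) :
    iterHilbertPoly e (i + 1) (x + 1) =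
      iterHilbertPoly e (i + 1) x + iterHilbertPoly e i (x + 1) := by
  simp only [iterHilbertPoly, sum_range_succ _ (i + 2), Nat.sub_self, Ring.choose_zero_right]
  have pascal : ∀ j ∈ range (i + 2),
      (-1 : ℚ) ^ j * e j *
          Ring.choose (((x + 1 : ℤ) : ℚ) + ((i + 1 : ℕ) : ℚ) + 1 - j) (i + 1 + 1 - j) =
        (-1 : ℚ) ^ j * e j * Ring.choose ((x : ℚ) + ((i + 1 : ℕ) : ℚ) + 1 - j) (i + 1 + 1 - j) +
          (-1 : ℚ) ^ j * e j * Ring.choose (((x + 1 : ℤ) : ℚ) + i + 1 - j) (i + 1 - j) := by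
    intro j hj
    have hn : i + 1 + 1 - j = (i + 1 - j) + 1 := by grind
    have hy : ((x + 1 : ℤ) : ℚ) + ((i + 1 : ℕ) : ℚ) + 1 - j = (x + (i + 1 : ℕ) + 1 - j) + 1 := by
      push_cast; ring
    have hy' : ((x + 1 : ℤ) : ℚ) + i + 1 - j = (x : ℚ) + (i + 1 : ℕ) + 1 - j := by
      push_cast; ring
    rw [hn, hy, hy', Ring.choose_succ_succ]
    ring
  rw [sum_congr rfl pascal, sum_add_distrib]
  ring

theorem iterHilbertPoly_zero (e : ℕ → ℚ) (x : ℤ) :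
    iterHilbertPoly e 0 x = e 0 * (x + 1) - e 1 := by
  simp [iterHilbertPoly, sum_range_succ, mul_comm, sub_eq_add_neg]

/-- For `r = k` this is the Hilbert coefficient `e_j(𝔪^k)`. -/
noncomputable def maxPowerCoeff (r : ℚ) (j : ℕ) : ℚ :=
  (r + 1) * Ring.choose r j - r * Ring.choose (r + 1) j

theorem maxPowerCoeff_zero (r : ℚ) : maxPowerCoeff r 0 = 1 := by
  simp [maxPowerCoeff]

theorem maxPowerCoeff_one (r : ℚ) : maxPowerCoeff r 1 = 0 := by
  simp only [maxPowerCoeff, Ring.choose_one_right]; ring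

theorem Ring.choose_add_natCast_sub_one (r : ℚ) (n : ℕ) :
    Ring.choose (r + n - 1) n = (-1) ^ n * Ring.choose (-r) n := by
  rw [Ring.choose_neg, Units.smul_def, Int.coe_negOnePow_natCast, zsmul_eq_mul]
  push_cast
  rw [← mul_assoc, ← mul_pow]
  norm_num

theorem sum_maxPowerCoeff_mul_choose_neg (r : ℚ) {m : ℕ} (hm : 2 ≤ m) :
    ∑ j ∈ range (m + 1), maxPowerCoeff r j * Ring.choose (-r) (m - j) = 0 := by
  have vandermonde (s : ℚ) : ∑ j ∈ range (m + 1), Ring.choose s j * Ring.choose (-r) (m - j) =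
      Ring.choose (s - r) m := by
    rw [sub_eq_add_neg, Ring.add_choose_eq m (Commute.all _ _),
      Nat.sum_antidiagonal_eq_sum_range_succ (fun a b => Ring.choose s a * Ring.choose (-r) b)]
  simp only [maxPowerCoeff, sub_mul, mul_assoc, sum_sub_distrib, ← mul_sum, vandermonde,
    sub_self, add_sub_cancel_left]
  rw [Ring.choose_zero_pos ℚ (by omega), ← Nat.cast_one, Ring.choose_natCast,
    Nat.choose_eq_zero_of_lt (by omega)]
  simp

theorem iterHilbertPoly_maxPowerCoeff_of_add_one_eq (r : ℚ) (i : ℕ) {x : ℤ}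
    (hx : (x : ℚ) + 1 = r) : iterHilbertPoly (maxPowerCoeff r) (i + 1) x = 0 := by
  have term : ∀ j ∈ range (i + 2 + 1), (-1 : ℚ) ^ j * maxPowerCoeff r j *
      Ring.choose ((x : ℚ) + ((i + 1 : ℕ) : ℚ) + 1 - j) (i + 1 + 1 - j) =
      (-1) ^ (i + 2) * (maxPowerCoeff r j * Ring.choose (-r) (i + 2 - j)) := by
    intro j hj_mem
    have hj : j ≤ i + 2 := by grind
    rw [show (x : ℚ) + ((i + 1 : ℕ) : ℚ) + 1 - j = r + ((i + 2 - j : ℕ) : ℚ) - 1 by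
      push_cast [hj]; linarith, Ring.choose_add_natCast_sub_one]
    rw [show i + 1 + 1 - j = i + 2 - j from rfl, ← Nat.add_sub_cancel' hj, pow_add]
    simp only [Nat.add_sub_cancel_left]
    ring
  rw [iterHilbertPoly, sum_congr rfl term, ← mul_sum,
    sum_maxPowerCoeff_mul_choose_neg r (by omega), mul_zero]

theorem maxPowerCoeff_natCast (k j : ℕ) : maxPowerCoeff k j = (1 - j) * (k + 1).choose j := by
  rw [maxPowerCoeff, ← Nat.cast_succ, Ring.choose_natCast, Ring.choose_natCast]
  rcases le_or_gt j (k + 1) with h | h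
  · have := congrArg (Nat.cast (R := ℚ)) (Nat.choose_mul_succ_eq k j)
    push_cast [h] at this ⊢
    linear_combination this
  · simp [Nat.choose_eq_zero_of_lt h, Nat.choose_eq_zero_of_lt (by omega : k < j)]

theorem exists_polynomial_maxPowerCoeff (j : ℕ) :
    ∃ Q : Polynomial ℚ, Q.degree ≤ j ∧ ∀ k : ℕ, maxPowerCoeff k j = Q.eval (k : ℚ) := by
  refine ⟨.C ((1 - j) / j.factorial) * (descPochhammer ℚ j).comp (.X + 1), ?_, fun k => ?_⟩
  · refine Polynomial.degree_le_of_natDegree_le (Polynomial.natDegree_C_mul_le _ _ |>.trans ?_)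
    rw [Polynomial.natDegree_comp, descPochhammer_natDegree, ← Polynomial.C_1,
      Polynomial.natDegree_X_add_C, mul_one]
  · have hfac : (j.factorial : ℚ) ≠ 0 := by positivity
    simp only [Polynomial.eval_mul, Polynomial.eval_C, Polynomial.eval_comp, Polynomial.eval_add,
      Polynomial.eval_X, Polynomial.eval_one]
    rw [← Nat.cast_succ, descPochhammer_eval_eq_descFactorial,
      Nat.descFactorial_eq_factorial_mul_choose, maxPowerCoeff_natCast]
    push_cast
    field_simp

/-- For `S = K[x_1,x_2]` and `𝔪 = (x_1,x_2)`, the higher iterated Hilbert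
coefficients of `𝔪^k` (for `k ≥ 1`, `i ≥ 0`, `0 ≤ j`) are
`e^i_j(𝔪^k) = (k+1)C(k,j) - kC(k+1,j)`: the `i`-th iterated Hilbert function of `𝔪^k`
(a module of dimension `2`) eventually agrees with the binomial-basis expansion with these
coefficients; in particular `e^i_j(𝔪^k)` is a polynomial in `k` of degree (at most) `j`. -/
theorem hilbert_coefficients_of_powers_of_max_ideal (K : Type) [Field K] :
    (∀ (i k : ℕ), 1 ≤ k → ∃ x0 : ℤ, ∀ x : ℤ, x ≥ x0 →
      iterHilbert (maxPowerHilbert K k) 0 i x =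
        ∑ j ∈ range (i + 2), (-1 : ℚ) ^ j *
          (((k : ℚ) + 1) * Ring.choose (k : ℚ) j - (k : ℚ) * Ring.choose ((k : ℚ) + 1) j) *
          Ring.choose ((x : ℚ) + (i : ℚ) + 1 - (j : ℚ)) (i + 1 - j)) ∧
    ∀ j : ℕ, ∃ Q : Polynomial ℚ, Q.degree ≤ (j : ℕ) ∧ ∀ k : ℕ, 1 ≤ k →
      ((k : ℚ) + 1) * Ring.choose (k : ℚ) j - (k : ℚ) * Ring.choose ((k : ℚ) + 1) j =
        Q.eval (k : ℚ) := by
  refine ⟨fun i k _ => ⟨k, fun x hx => ?_⟩, fun j => ?_⟩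
  · refine iterHilbert_eq_of_recursion (Int.natCast_nonneg k) (iterHilbertPoly_succ_add_one _)
      (fun i => iterHilbertPoly_maxPowerCoeff_of_add_one_eq _ i (by push_cast; ring))
      (fun x hx => maxPowerHilbert_of_lt K hx) (fun x hx => ?_) i x hx
    rw [maxPowerHilbert_of_le K hx, iterHilbertPoly_zero, maxPowerCoeff_zero, maxPowerCoeff_one]
    ring
  · obtain ⟨Q, hQ_deg, hQ_eval⟩ := exists_polynomial_maxPowerCoeff j
    exact ⟨Q, hQ_deg, fun k _ => hQ_eval k⟩
end
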